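/- Let P be a polytope, F a full flag of P, E an edge of P containing the vertex F_0, and L a face of P containing F_0. Then for any ν ∈ E^⊥: ν lies in the normal cone N_P(L) if and only if ν lies in the normal cone N_{P'}(supp_{P'}(L')), where P' = proj_{E^⊥} P and L' = proj_{E^⊥} L. -/

import Mathlib

open RealInnerProductSpace

noncomputable section

abbrev Euc (d : ℕ) := EuclideanSpace ℝ (Fin d)

/-- A polytope is the convex hull of a finite set of points. -/
def IsPolytope {d : ℕ} (P : Set (Euc d)) : Prop :=
  ∃ V : Set (Euc d), V.Finite ∧ P = convexHull ℝ V

/-- The dimension of a subset: the rank of its vector span (direction of its affine hull). -/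
noncomputable def sdim {d : ℕ} (F : Set (Euc d)) : ℕ :=
  Module.finrank ℝ (vectorSpan ℝ F)

/-- A full flag of a `k`-dimensional polytope `P`: a chain of nonempty faces,
one in each dimension `0, …, k-1`.  For indices `≥ k` the face is `P` itself by convention. -/
structure FullFlag {d : ℕ} (P : Set (Euc d)) (k : ℕ) where
  face : ℕ → Set (Euc d)
  exposed : ∀ i < k, IsExposed ℝ P (face i)
  nonempty : ∀ i < k, (face i).Nonempty
  dim_eq : ∀ i < k, sdim (face i) = i
  chain : ∀ i j : ℕ, i < j → j < k → face i ⊆ face j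
  top : ∀ i, k ≤ i → face i = P

/-- Orthogonal projection onto the complement of the direction of an edge `Eg`. -/
noncomputable def edgeProj {d : ℕ} (Eg : Set (Euc d)) (x : Euc d) : Euc d :=
  (Submodule.orthogonalProjection ((vectorSpan ℝ Eg)ᗮ) x : Euc d)

/-- `S = supp_Q A`: `S` is the minimal face of `Q` containing `A`. -/
def IsSuppFace {d : ℕ} (Q A S : Set (Euc d)) : Prop :=
  IsExposed ℝ Q S ∧ A ⊆ S ∧ ∀ T, IsExposed ℝ Q T → A ⊆ T → S ⊆ T

/-- The face of `P` in direction `ν`. -/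
def faceAt {d : ℕ} (P : Set (Euc d)) (ν : Euc d) : Set (Euc d) :=
  {x ∈ P | ∀ y ∈ P, ⟪y, ν⟫ ≤ ⟪x, ν⟫}

/-- The normal cone of a face `F` of `P`. -/
def normalCone {d : ℕ} (P F : Set (Euc d)) : Set (Euc d) :=
  {ν | F ⊆ faceAt P ν}

/-!
For `ν ⊥ E` the functional `⟪·, ν⟫` factors through the projection onto `E^⊥`, so the projection
maps the face `P(ν)` onto `P'(ν)`; hence `ν ∈ N_P(L) ↔ ν ∈ N_{P'}(L')`. Finally `N_{P'}(L')` and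
`N_{P'}(supp_{P'} L')` agree because `P'(ν)` is itself a face of `P'`, so it contains `L'` exactly
when it contains the minimal face containing `L'`.
-/

theorem inner_starProjection_left_of_mem {E : Type*} [NormedAddCommGroup E]
    [InnerProductSpace ℝ E] (K : Submodule ℝ E) [K.HasOrthogonalProjection] {ν : E} (hν : ν ∈ K)
    (x : E) : ⟪K.starProjection x, ν⟫ = ⟪x, ν⟫ := by
  rw [Submodule.inner_starProjection_left_eq_right, Submodule.starProjection_eq_self_iff.2 hν]

theorem inner_edgeProj_left_of_mem_orthogonal {d : ℕ} {Eg : Set (Euc d)} {ν : Euc d}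
    (hν : ν ∈ (vectorSpan ℝ Eg)ᗮ) (x : Euc d) : ⟪edgeProj Eg x, ν⟫ = ⟪x, ν⟫ :=
  inner_starProjection_left_of_mem _ hν x

theorem isExposed_faceAt {d : ℕ} (Q : Set (Euc d)) (ν : Euc d) :
    IsExposed ℝ Q (faceAt Q ν) := fun _ => ⟨innerSL ℝ ν, by
  ext x
  simp only [faceAt, Set.mem_ofPred_eq, innerSL_apply_apply, real_inner_comm ν]⟩

theorem mem_normalCone_image_iff {d : ℕ} {f : Euc d → Euc d} {P A : Set (Euc d)} {ν : Euc d}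
    (hf : ∀ x, ⟪f x, ν⟫ = ⟪x, ν⟫) (hA : A ⊆ P) :
    ν ∈ normalCone (f '' P) (f '' A) ↔ ν ∈ normalCone P A := by
  simp only [normalCone, faceAt, Set.subset_def, Set.mem_ofPred_eq, Set.forall_mem_image, hf]
  exact ⟨fun h x hx => ⟨hA hx, (h hx).2⟩,
    fun h x hx => ⟨Set.mem_image_of_mem f (hA hx), (h x hx).2⟩⟩

theorem IsSuppFace.mem_normalCone_iff {d : ℕ} {Q A S : Set (Euc d)} (hS : IsSuppFace Q A S)
    {ν : Euc d} : ν ∈ normalCone Q S ↔ ν ∈ normalCone Q A :=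
  ⟨fun h => hS.2.1.trans h, fun h => hS.2.2 _ (isExposed_faceAt Q ν) h⟩

theorem stmt_19_general {d : ℕ} (P : Set (Euc d))
    (Eg : Set (Euc d))
    (L : Set (Euc d)) (hL : IsExposed ℝ P L)
    (ν : Euc d) (hν : ν ∈ (vectorSpan ℝ Eg)ᗮ) :
    ∀ S : Set (Euc d), IsSuppFace (edgeProj Eg '' P) (edgeProj Eg '' L) S →
      (ν ∈ normalCone P L ↔ ν ∈ normalCone (edgeProj Eg '' P) S) := fun _ hS =>
  (mem_normalCone_image_iff (inner_edgeProj_left_of_mem_orthogonal hν) hL.subset).symm.trans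
    hS.mem_normalCone_iff.symm

/-- For `ν ⊥ E`: `ν ∈ N_P(L)` iff `ν ∈ N_{P'}(supp_{P'} L')` where `P' = proj_{E^⊥} P` and
`L' = proj_{E^⊥} L`. -/
theorem stmt_19 {d : ℕ} (P : Set (Euc d)) (hP : IsPolytope P) (hPd : sdim P = d)
    (F : FullFlag P d)
    (Eg : Set (Euc d)) (hE : IsExposed ℝ P Eg) (hEne : Eg.Nonempty) (hEdim : sdim Eg = 1)
    (hE0 : F.face 0 ⊆ Eg)
    (L : Set (Euc d)) (hL : IsExposed ℝ P L) (hLne : L.Nonempty) (hL0 : F.face 0 ⊆ L)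
    (ν : Euc d) (hν : ν ∈ (vectorSpan ℝ Eg)ᗮ) :
    ∀ S : Set (Euc d), IsSuppFace (edgeProj Eg '' P) (edgeProj Eg '' L) S →
      (ν ∈ normalCone P L ↔ ν ∈ normalCone (edgeProj Eg '' P) S) :=
  stmt_19_general P Eg L hL ν hν
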